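/- If x : A → {0,1} selects the arcs of a simple directed path from node 1 to node n in a digraph on nodes N = {1,…,n}, then there exists an assignment s : N → ℝ with 1 ≤ s_i ≤ n−1 for i ≠ 1 satisfying s_i − s_j + (n+1)x_{ij} ≤ n for all arcs (i,j). -/
import Mathlib


theorem simple_path_admits_MTZ_certificate (n : ℕ) (hn : 2 ≤ n)
    (k : ℕ) (v : ℕ → Fin n)
    (hinj : Set.InjOn v {t | t ≤ k})
    (hstart : v 0 = ⟨0, by omega⟩) (hend : v k = ⟨n - 1, by omega⟩)
    (x : Fin n → Fin n → ℝ)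
    (hx : ∀ i j : Fin n,
      (x i j = 1 ↔ ∃ t < k, v t = i ∧ v (t + 1) = j) ∧ (x i j = 0 ∨ x i j = 1)) :
    ∃ s : Fin n → ℝ,
      (∀ i : Fin n, i ≠ v 0 → 1 ≤ s i ∧ s i ≤ (n : ℝ) - 1) ∧
      ∀ i j : Fin n, s i - s j + ((n : ℝ) + 1) * x i j ≤ (n : ℝ) := by
  classical
  -- k ≤ n - 1
  have hkn : k + 1 ≤ n := by
    have hcard := Finset.card_le_card_of_injOn v
      (fun t _ => Finset.mem_univ (v t))
      (fun a ha b hb hab => hinj (by simpa using (Finset.mem_range_succ_iff.mp ha))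
        (by simpa using (Finset.mem_range_succ_iff.mp hb)) hab)
      (s := Finset.range (k + 1)) (t := (Finset.univ : Finset (Fin n)))
    simpa using hcard
  set s : Fin n → ℝ := fun i =>
    if h : ∃ t, t ≤ k ∧ v t = i then ((h.choose : ℕ) : ℝ) else (n : ℝ) - 1 with hs
  have hpos : ∀ t, t ≤ k → s (v t) = (t : ℝ) := by
    intro t ht
    have h : ∃ u, u ≤ k ∧ v u = v t := ⟨t, ht, rfl⟩
    have hspec := h.choose_spec
    have : h.choose = t := hinj hspec.1 ht hspec.2
    simp [hs, dif_pos h, this]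
  refine ⟨s, ?_, ?_⟩
  · intro i hi
    by_cases h : ∃ t, t ≤ k ∧ v t = i
    · obtain ⟨t, ht, hvt⟩ := h
      have hst : s i = (t : ℝ) := by rw [← hvt]; exact hpos t ht
      have ht1 : 1 ≤ t := by
        rcases Nat.eq_zero_or_pos t with h0 | h0
        · exact absurd (by rw [← hvt, h0]) hi
        · exact h0
      constructor
      · rw [hst]; exact_mod_cast ht1
      · rw [hst]
        have : (t : ℝ) ≤ (k : ℝ) := by exact_mod_cast ht
        have : (k : ℝ) ≤ (n : ℝ) - 1 := by
          have : (k : ℝ) + 1 ≤ (n : ℝ) := by exact_mod_cast hkn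
          linarith
        linarith
    · simp only [hs, dif_neg h]
      constructor
      · have : (2 : ℝ) ≤ (n : ℝ) := by exact_mod_cast hn
        linarith
      · linarith
  · intro i j
    have hslb : ∀ m : Fin n, (0 : ℝ) ≤ s m := by
      intro m
      by_cases h : ∃ t, t ≤ k ∧ v t = m
      · simp only [hs, dif_pos h]; positivity
      · simp only [hs, dif_neg h]
        have : (2 : ℝ) ≤ (n : ℝ) := by exact_mod_cast hn
        linarith
    have hsub : ∀ m : Fin n, s m ≤ (n : ℝ) - 1 := by
      intro m
      by_cases h : ∃ t, t ≤ k ∧ v t = m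
      · simp only [hs, dif_pos h]
        have := h.choose_spec.1
        have h1 : ((h.choose : ℕ) : ℝ) ≤ (k : ℝ) := by exact_mod_cast this
        have h2 : (k : ℝ) + 1 ≤ (n : ℝ) := by exact_mod_cast hkn
        linarith
      · simp only [hs, dif_neg h]
        exact le_refl _
    rcases (hx i j).2 with h0 | h1
    · rw [h0]
      have := hslb j
      have := hsub i
      linarith
    · obtain ⟨t, htk, hvi, hvj⟩ := (hx i j).1.mp h1
      have hsi : s i = (t : ℝ) := by rw [← hvi]; exact hpos t (le_of_lt htk)
      have hsj : s j = ((t : ℝ) + 1) := by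
        rw [← hvj]
        have := hpos (t + 1) htk
        rw [this]; push_cast; ring
      rw [hsi, hsj, h1]
      ring_nf
      linarith
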